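/- In the Set Cover reduction instance for EF1 (where each element of the universe appears in at least two sets and each element agent holds f_s − 2 private resources), deleting a set R' ⊆ {r_C : C ∈ 𝒞} of at most z resources from the special agent's bundle yields an EF1 allocation if and only if the sets {C : r_C ∈ R'} cover the universe S; hence the EF1-donation instance is a yes-instance iff the Set Cover instance has a cover of size at most z. -/

import Mathlib

/-- Number of sets of the family (indexed by ι) containing element s. -/
def f10 {σ ι : Type*} [Fintype ι] [DecidableEq σ] (C : ι → Finset σ) (s : σ) : ℕ :=
  (Finset.univ.filter (fun i => s ∈ C i)).card

/-- Utilities in the Set Cover reduction for EF1: agent `none` is the special agent a*,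
agent `some s` is the element agent a_s holding `f_s − 2` private resources. -/
def u10 {σ ι : Type*} [Fintype ι] [DecidableEq σ] (C : ι → Finset σ) :
    Option σ → ((Σ s : σ, Fin (f10 C s - 2)) ⊕ ι) → ℕ
  | none, _ => 0
  | some s, Sum.inl p => if p.1 = s then 1 else 0
  | some s, Sum.inr i => if s ∈ C i then 1 else 0

/-- The allocation after deleting `{r_C : C ∈ R'}` from a*'s bundle. -/
def π10 {σ ι : Type*} [Fintype σ] [Fintype ι] [DecidableEq σ] [DecidableEq ι]
    (C : ι → Finset σ) (R' : Finset ι) :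
    Option σ → Finset ((Σ s : σ, Fin (f10 C s - 2)) ⊕ ι)
  | none => (Finset.univ \ R').image Sum.inr
  | some s => Finset.univ.image (fun j : Fin (f10 C s - 2) => Sum.inl ⟨s, j⟩)



section
variable {σ ι : Type*} [Fintype σ] [Fintype ι] [DecidableEq σ] [DecidableEq ι]
  (C : ι → Finset σ)

lemma u10_none (x) : u10 C none x = 0 := rfl
lemma u10_inr (s : σ) (i : ι) : u10 C (some s) (Sum.inr i) = if s ∈ C i then 1 else 0 := rfl

lemma π10_none (R' : Finset ι) : π10 C R' none = (Finset.univ \ R').image Sum.inr := rfl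
lemma π10_some (R' : Finset ι) (s : σ) :
    π10 C R' (some s) = Finset.univ.image (fun j : Fin (f10 C s - 2) => Sum.inl ⟨s, j⟩) := rfl

lemma sum_inr (T : Finset ι) (s : σ) :
    (T.image Sum.inr).sum (u10 C (some s)) = (T.filter (fun i => s ∈ C i)).card := by
  rw [Finset.sum_image (fun a _ b _ h => Sum.inr_injective h), Finset.card_filter]
  rfl

lemma sum_inl (s t : σ) :
    ((Finset.univ.image (fun j : Fin (f10 C s - 2) => Sum.inl ⟨s, j⟩)).sum (u10 C (some t)))
      = if s = t then f10 C s - 2 else 0 := by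
  rw [Finset.sum_image (by intro a _ b _ h; simpa using h)]
  have : ∀ j : Fin (f10 C s - 2), u10 C (some t) (Sum.inl ⟨s, j⟩) = if s = t then 1 else 0 :=
    fun _ => rfl
  simp only [this, Finset.sum_ite_irrel, Finset.sum_const, Finset.sum_const_zero,
    Finset.card_univ, Fintype.card_fin, smul_eq_mul, mul_one, mul_zero]

set_option linter.unusedSectionVars false in
lemma ef1_iff (hf : ∀ s : σ, 2 ≤ f10 C s) (R' : Finset ι) :
    (∀ a b : Option σ, a ≠ b →
      ¬ ((π10 C R' b).Nonempty ∧
        ∀ r ∈ π10 C R' b,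
          (π10 C R' a).sum (u10 C a) < ((π10 C R' b).erase r).sum (u10 C a))) ↔
    (∀ s : σ, ∃ i ∈ R', s ∈ C i) := by
  constructor
  · intro h s
    by_contra hc
    push_neg at hc
    apply h (some s) none (by simp)
    have hsub : Finset.univ.filter (fun i => s ∈ C i) ⊆ Finset.univ \ R' := by
      intro i hi
      simp only [Finset.mem_filter, Finset.mem_univ, true_and] at hi
      simp only [Finset.mem_sdiff, Finset.mem_univ, true_and]
      exact fun hiR => hc i hiR hi
    have hfilter : (Finset.univ \ R').filter (fun i => s ∈ C i)
        = Finset.univ.filter (fun i => s ∈ C i) := by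
      apply Finset.Subset.antisymm
      · exact Finset.filter_subset_filter _ (Finset.sdiff_subset)
      · intro i hi
        exact Finset.mem_filter.mpr ⟨hsub hi, (Finset.mem_filter.mp hi).2⟩
    have hne : (Finset.univ.filter (fun i => s ∈ C i)).Nonempty :=
      Finset.card_pos.mp (lt_of_lt_of_le two_pos (hf s))
    constructor
    · obtain ⟨i, hi⟩ := hne
      rw [π10_none]
      exact ⟨Sum.inr i, Finset.mem_image_of_mem _ (hsub hi)⟩
    · intro r hr
      rw [π10_none] at hr
      obtain ⟨i, hiT, rfl⟩ := Finset.mem_image.mp hr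
      rw [π10_some, π10_none, sum_inl, if_pos rfl,
        ← Finset.image_erase Sum.inr_injective, sum_inr, Finset.filter_erase, hfilter]
      have h1 : f10 C s - 1 ≤ ((Finset.univ.filter (fun i => s ∈ C i)).erase i).card := by
        have := Finset.pred_card_le_card_erase (s := Finset.univ.filter (fun i => s ∈ C i)) (a := i)
        simpa [f10] using this
      have := hf s
      omega
  · intro hcov a b hab
    rintro ⟨hne, hall⟩
    match a, b with
    | none, b =>
      obtain ⟨r, hr⟩ := hne
      have := hall r hr
      have h0 : ∀ T : Finset ((Σ s : σ, Fin (f10 C s - 2)) ⊕ ι), T.sum (u10 C none) = 0 :=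
        fun T => Finset.sum_eq_zero (fun x _ => u10_none C x)
      simp only [h0] at this
      exact absurd this (lt_irrefl 0)
    | some s, some t =>
      have hst : s ≠ t := by simpa using hab
      obtain ⟨r, hr⟩ := hne
      have h1 := hall r hr
      have h2 : ((π10 C R' (some t)).erase r).sum (u10 C (some s))
          ≤ (π10 C R' (some t)).sum (u10 C (some s)) :=
        Finset.sum_le_sum_of_subset (Finset.erase_subset _ _)
      rw [π10_some C R' t] at h1 h2
      rw [sum_inl, if_neg (fun h => hst h.symm)] at h2
      omega
    | some s, none =>
      obtain ⟨i0, hi0R, hi0C⟩ := hcov s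
      have hk : ((Finset.univ \ R').filter (fun i => s ∈ C i)).card ≤ f10 C s - 1 := by
        have hsub : (Finset.univ \ R').filter (fun i => s ∈ C i)
            ⊆ (Finset.univ.filter (fun i => s ∈ C i)).erase i0 := by
          intro x hx
          simp only [Finset.mem_filter, Finset.mem_sdiff, Finset.mem_univ, true_and] at hx
          refine Finset.mem_erase.mpr ⟨fun h => hx.1 (h ▸ hi0R), ?_⟩
          exact Finset.mem_filter.mpr ⟨Finset.mem_univ _, hx.2⟩
        calc _ ≤ ((Finset.univ.filter (fun i => s ∈ C i)).erase i0).card :=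
              Finset.card_le_card hsub
          _ = f10 C s - 1 := by
              have hmem : i0 ∈ Finset.univ.filter (fun i => s ∈ C i) :=
                Finset.mem_filter.mpr ⟨Finset.mem_univ _, hi0C⟩
              rw [Finset.card_erase_of_mem hmem]
              rfl
      rcases Nat.eq_zero_or_pos ((Finset.univ \ R').filter (fun i => s ∈ C i)).card with h0 | hpos
      · obtain ⟨r, hr⟩ := hne
        have h1 := hall r hr
        have h2 : ((π10 C R' none).erase r).sum (u10 C (some s))
            ≤ (π10 C R' none).sum (u10 C (some s)) :=
          Finset.sum_le_sum_of_subset (Finset.erase_subset _ _)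
        rw [π10_none] at h1 h2
        rw [sum_inr, h0] at h2
        omega
      · obtain ⟨j, hj⟩ := Finset.card_pos.mp hpos
        have hj' := Finset.mem_filter.mp hj
        have hrmem : Sum.inr j ∈ π10 C R' none := by
          rw [π10_none]; exact Finset.mem_image_of_mem _ hj'.1
        have h1 := hall (Sum.inr j) hrmem
        rw [π10_some, sum_inl, if_pos rfl, π10_none,
          ← Finset.image_erase Sum.inr_injective, sum_inr, Finset.filter_erase,
          Finset.card_erase_of_mem hj] at h1
        have := hf s
        omega

end

/-- Deleting R' (|R'| ≤ z) from the special agent's bundle yields an EF1 allocation iff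
the corresponding sets cover the universe; hence the EF1-donation instance is a
yes-instance iff the Set Cover instance has a cover of size at most z. -/
theorem stmt10 {σ ι : Type*} [Fintype σ] [Fintype ι] [DecidableEq σ] [DecidableEq ι]
    (C : ι → Finset σ) (z : ℕ)
    (hf : ∀ s : σ, 2 ≤ f10 C s) :
    (∀ R' : Finset ι, R'.card ≤ z →
      ((∀ a b : Option σ, a ≠ b →
          ¬ ((π10 C R' b).Nonempty ∧
            ∀ r ∈ π10 C R' b,
              (π10 C R' a).sum (u10 C a) < ((π10 C R' b).erase r).sum (u10 C a))) ↔
        (∀ s : σ, ∃ i ∈ R', s ∈ C i))) ∧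
    ((∃ R' : Finset ι, R'.card ≤ z ∧
        (∀ a b : Option σ, a ≠ b →
          ¬ ((π10 C R' b).Nonempty ∧
            ∀ r ∈ π10 C R' b,
              (π10 C R' a).sum (u10 C a) < ((π10 C R' b).erase r).sum (u10 C a)))) ↔
      (∃ I : Finset ι, I.card ≤ z ∧ ∀ s : σ, ∃ i ∈ I, s ∈ C i)) := by
  refine ⟨fun R' _ => ef1_iff C hf R', ?_⟩
  constructor
  · rintro ⟨R', hz, hEF⟩
    exact ⟨R', hz, (ef1_iff C hf R').mp hEF⟩
  · rintro ⟨I, hz, hcov⟩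
    exact ⟨I, hz, (ef1_iff C hf I).mpr hcov⟩
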